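/- arXiv:2010.08889 — 4 statements merged into one kernel-verified Lean document; each statement's English description precedes it below -/
import Mathlib

section
/- For all natural numbers b, m, s with b ≥ 2 and m, s ≥ 1, and all real x, the quantity G_s(x) satisfies the third-order recurrence in s: (s+2)(bx−1)·G_{s+3}(x) + (m(bx−1)(x−1) + bsx(x−2) + bx(x−3) − s(2x−3) − 3x + 5)·G_{s+2}(x) − (x−1)(bmx + bsx + bx + mx − 2m + sx − 3s + x − 4)·G_{s+1}(x) + (x−1)²(m+s+1)·G_s(x) = 0, where G_{s+j}(x) denotes the same expression with s replaced by s+j (and the same b, m, x). -/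
/-!
Put `y = b x` and expand `G_s = ∑ₖ aₛ(k) yᵏ`. As a function of `s`, each coefficient
`aₛ(k) = ∑ᵣ C(s,r) tₖ(r)` is a binomial transform, so Pascal's rule gives
`aₛ₊₁(k) = aₛ(k) + a'ₛ(k)`, where `a'` is the transform of the shifted sequence `r ↦ tₖ(r + 1)`.
Hence the coefficient of `yᵏ` in `(1 - y) G_{s+2} - (2 - x - y) G_{s+1} + (1 - x) G_s` is
`a''ₛ(k) - a''ₛ(k-1) - (1 - 1/b) a'ₛ(k-1)`. In this difference the truncated binomial sums inside
`tₖ(r)` telescope, Vandermonde's identity evaluates what is left, and the binomial theorem sums the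
result to `(b - 1) bᵐ x^{m+1} C(m+s, m-1) (1 - x)^{s+1}`. Two consecutive instances of this
inhomogeneous second-order recurrence, weighted so that their right-hand sides cancel by
`(s + 2) C(m+s+1, m-1) = (m+s+1) C(m+s, m-1)`, give the third-order recurrence.
-/

open Finset

/-- The combinatorial binomial coefficient `C(n, j)`, as a real number:
equal to `n.choose j` when `0 ≤ j ≤ n`, and `0` otherwise. -/
noncomputable def C (n j : ℤ) : ℝ :=
  if 0 ≤ j ∧ j ≤ n then (Nat.choose n.toNat j.toNat : ℝ) else 0

/-- The polynomial `G_s(x)` from Wiart–Wong, for parameters `b, m, s`. -/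
noncomputable def G (b m s : ℕ) (x : ℝ) : ℝ :=
  ∑ k ∈ Finset.Icc (1 : ℤ) ((m : ℤ) + (s : ℤ) - 1),
    (∑ r ∈ Finset.Icc (1 : ℤ) (s : ℤ),
        C (s : ℤ) r * C (k - 1) (r - 1) * (((b : ℝ) - 1) / (-(b : ℝ)) ^ r) *
          ∑ i ∈ Finset.Icc (0 : ℤ) (r - 1 - max (k - (m : ℤ)) 0),
            (-(b : ℝ)) ^ i * C (r - 1) i) *
      ((b : ℝ) * x) ^ k

namespace C

lemma eq_zero_of_neg_right {n j : ℤ} (h : j < 0) : C n j = 0 := by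
  simp only [C, if_neg (show ¬(0 ≤ j ∧ j ≤ n) by omega)]

lemma eq_zero_of_lt {n j : ℤ} (h : n < j) : C n j = 0 := by
  simp only [C, if_neg (show ¬(0 ≤ j ∧ j ≤ n) by omega)]

lemma eq_zero_of_neg_left {n j : ℤ} (h : n < 0) : C n j = 0 := by
  simp only [C, if_neg (show ¬(0 ≤ j ∧ j ≤ n) by omega)]

lemma natCast (n j : ℕ) : C n j = n.choose j := by
  by_cases h : j ≤ n
  · simp [C, h]
  · rw [eq_zero_of_lt (by omega), Nat.choose_eq_zero_of_lt (by omega), Nat.cast_zero]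

@[simp] lemma zero_zero : C 0 0 = 1 := by simp [C]

lemma succ_left {n : ℤ} (hn : 0 ≤ n) (j : ℤ) : C (n + 1) j = C n j + C n (j - 1) := by
  lift n to ℕ using hn
  rcases lt_or_ge j 0 with hj | hj
  · rw [eq_zero_of_neg_right hj, eq_zero_of_neg_right hj, eq_zero_of_neg_right (by omega),
      add_zero]
  lift j to ℕ using hj
  rcases j with _ | j
  · rw [Nat.cast_zero, zero_sub, eq_zero_of_neg_right (j := -1) (by norm_num), add_zero,
      ← Nat.cast_succ, ← Nat.cast_zero, natCast, natCast, Nat.choose_zero_right,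
      Nat.choose_zero_right]
  · rw [show ((j + 1 : ℕ) : ℤ) - 1 = j by push_cast; ring, ← Nat.cast_succ, natCast, natCast,
      natCast, Nat.choose_succ_succ', Nat.cast_add, add_comm]

lemma symm (n j : ℤ) : C n j = C n (n - j) := by
  rcases lt_or_ge n 0 with hn | hn
  · rw [eq_zero_of_neg_left hn, eq_zero_of_neg_left hn]
  rcases lt_or_ge j 0 with hj | hj
  · rw [eq_zero_of_neg_right hj, eq_zero_of_lt (by omega)]
  rcases le_or_gt j n with hjn | hjn
  · lift n to ℕ using hn
    lift j to ℕ using hj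
    rw [show (n : ℤ) - j = ((n - j : ℕ) : ℤ) by omega, natCast, natCast,
      Nat.choose_symm (by omega)]
  · rw [eq_zero_of_lt hjn, eq_zero_of_neg_right (by omega)]

lemma mul (n i j : ℤ) : C n i * C i j = C n j * C (n - j) (i - j) := by
  rcases lt_or_ge j 0 with hj | hj
  · rw [eq_zero_of_neg_right hj, eq_zero_of_neg_right hj, mul_zero, zero_mul]
  rcases lt_or_ge i j with hij | hij
  · rw [eq_zero_of_lt hij, eq_zero_of_neg_right (show i - j < 0 by omega), mul_zero, mul_zero]
  rcases lt_or_ge n i with hni | hni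
  · rw [eq_zero_of_lt hni, eq_zero_of_lt (show n - j < i - j by omega), zero_mul, mul_zero]
  lift j to ℕ using hj
  lift i to ℕ using (by omega)
  lift n to ℕ using (by omega)
  rw [show (n : ℤ) - j = ((n - j : ℕ) : ℤ) by omega,
    show (i : ℤ) - j = ((i - j : ℕ) : ℤ) by omega]
  simp only [natCast]
  exact_mod_cast Nat.choose_mul (by omega : j ≤ i)

lemma sub_mul_succ (n : ℕ) (j : ℤ) :
    ((n : ℝ) + 1 - j) * C (n + 1) j = (n + 1) * C n j := by
  rcases lt_or_ge j 0 with hj | hj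
  · rw [eq_zero_of_neg_right hj, eq_zero_of_neg_right hj, mul_zero, mul_zero]
  rcases lt_or_ge (n : ℤ) j with hjn | hjn
  · rw [eq_zero_of_lt hjn]
    rcases eq_or_lt_of_le (Int.add_one_le_of_lt hjn) with rfl | hlt
    · push_cast; ring
    · rw [eq_zero_of_lt hlt, mul_zero, mul_zero]
  lift j to ℕ using hj
  rw [show ((n : ℤ) + 1) = ((n + 1 : ℕ) : ℤ) by push_cast; ring, natCast, natCast]
  have key :
      ((n.choose j : ℕ) : ℝ) * (n + 1) = ((n + 1).choose j : ℕ) * ((n : ℝ) + 1 - j) := by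
    rw [← Nat.cast_succ, ← Nat.cast_sub (by omega), ← Nat.cast_mul, ← Nat.cast_mul,
      Nat.choose_mul_succ_eq]
  push_cast
  linarith

end C

section IntervalSums

variable {M : Type*} [AddCommMonoid M]

lemma Finset.sum_Icc_add_right (f : ℤ → M) (a b c : ℤ) :
    ∑ x ∈ Icc a b, f (x + c) = ∑ x ∈ Icc (a + c) (b + c), f x := by
  rw [← map_add_right_Icc, sum_map]
  rfl

lemma Finset.sum_Icc_add_one_right {a b : ℤ} (h : a ≤ b + 1) (f : ℤ → M) :
    ∑ x ∈ Icc a (b + 1), f x = ∑ x ∈ Icc a b, f x + f (b + 1) := by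
  rw [← insert_Icc_right_eq_Icc_add_one h, sum_insert (by simp), add_comm]

lemma Finset.sum_Icc_eq_add_sum_Icc_add_one {a b : ℤ} (h : a ≤ b) (f : ℤ → M) :
    ∑ x ∈ Icc a b, f x = f a + ∑ x ∈ Icc (a + 1) b, f x := by
  rw [← insert_Icc_add_one_left_eq_Icc h, sum_insert (by simp)]

lemma Finset.sum_Icc_one_comp_add_one {N : ℤ} (hN : 0 ≤ N)
    (g : ℤ → M) (h1 : g 1 = 0) (hN1 : g (N + 1) = 0) :
    ∑ k ∈ Icc 1 N, g (k + 1) = ∑ k ∈ Icc 1 N, g k := by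
  rw [sum_Icc_add_right, ← zero_add (∑ k ∈ Icc (1 + 1) (N + 1), g k), ← h1,
    ← sum_Icc_eq_add_sum_Icc_add_one (by omega), sum_Icc_add_one_right (by omega), hN1, add_zero]

end IntervalSums

noncomputable def binomialTransform (a : ℤ → ℝ) (n : ℕ) : ℝ :=
  ∑ p ∈ Icc (0 : ℤ) n, C n p * a p

namespace binomialTransform

lemma const_mul (c : ℝ) (a : ℤ → ℝ) (n : ℕ) :
    binomialTransform (fun p => c * a p) n = c * binomialTransform a n := by
  simp only [binomialTransform, mul_sum, mul_left_comm]

lemma eq_zero {a : ℤ → ℝ} {n : ℕ} (h : ∀ p : ℤ, 0 ≤ p → p ≤ n → a p = 0) :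
    binomialTransform a n = 0 :=
  sum_eq_zero fun p hp => by rw [h p (mem_Icc.1 hp).1 (mem_Icc.1 hp).2, mul_zero]

lemma eq_sum_Icc_one {a : ℤ → ℝ} (h : a 0 = 0) (n : ℕ) :
    binomialTransform a n = ∑ r ∈ Icc (1 : ℤ) n, C n r * a r := by
  rw [binomialTransform, sum_Icc_eq_add_sum_Icc_add_one (by positivity), h, mul_zero, zero_add,
    zero_add]

lemma succ (a : ℤ → ℝ) (n : ℕ) :
    binomialTransform a (n + 1)
      = binomialTransform a n + binomialTransform (fun p => a (p + 1)) n := by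
  have hpascal : ∀ p, C ((n + 1 : ℕ) : ℤ) p * a p = C n p * a p + C n (p - 1) * a p :=
    fun p => by
      rw [Nat.cast_succ, C.succ_left (by positivity), add_mul]
  simp only [binomialTransform, hpascal, sum_add_distrib]
  congr 1
  · rw [Nat.cast_succ, sum_Icc_add_one_right (by positivity), C.eq_zero_of_lt (by omega),
      zero_mul, add_zero]
  · rw [Nat.cast_succ, sum_Icc_eq_add_sum_Icc_add_one (by positivity),
      C.eq_zero_of_neg_right (by norm_num), zero_mul, zero_add, ← sum_Icc_add_right]
    simp only [add_sub_cancel_right]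

lemma vandermonde (k : ℕ) (t : ℤ) (n : ℕ) :
    binomialTransform (fun p => C k (t - p)) n = C (n + k) t := by
  induction n generalizing t with
  | zero => simp [binomialTransform]
  | succ n ih =>
    have hshift : (fun p : ℤ => C k (t - (p + 1))) = fun p => C k (t - 1 - p) := by
      funext p; ring_nf
    rw [succ, hshift, ih, ih, ← C.succ_left (by positivity), Nat.cast_succ, add_right_comm]

lemma zpow_eq_one_add_pow {z : ℝ} (hz : z ≠ 0) (n : ℕ) :
    binomialTransform (fun p => z ^ p) n = (1 + z) ^ n := by
  induction n with
  | zero => simp [binomialTransform]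
  | succ n ih =>
    simp only [succ, zpow_add_one₀ hz, mul_comm _ z, const_mul, ih, pow_succ]
    ring

lemma congr {a a' : ℤ → ℝ} {n : ℕ} (h : ∀ p : ℤ, 0 ≤ p → p ≤ n → a p = a' p) :
    binomialTransform a n = binomialTransform a' n :=
  sum_congr rfl fun p hp => by rw [h p (mem_Icc.1 hp).1 (mem_Icc.1 hp).2]

lemma eq_sum_Icc_sub (g : ℤ → ℝ) (n : ℕ) {a b c : ℤ} (ha : a ≤ c) (hb : c + n ≤ b) :
    ∑ k ∈ Icc a b, C n (k - c) * g k = binomialTransform (fun t => g (t + c)) n := by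
  have hsub : ∀ p, C n p * g (p + c) = C n (p + c - c) * g (p + c) := by simp
  rw [binomialTransform, sum_congr rfl fun p _ => hsub p,
    sum_Icc_add_right (fun k => C n (k - c) * g k), zero_add]
  refine (sum_subset (Icc_subset_Icc ha (by omega)) fun k hk hk' => ?_).symm
  rw [mem_Icc] at hk hk'
  rcases lt_or_ge k c with h | h
  · rw [C.eq_zero_of_neg_right (by omega), zero_mul]
  · rw [C.eq_zero_of_lt (by omega), zero_mul]

end binomialTransform

noncomputable def truncBinomSum (z : ℝ) (n U : ℤ) : ℝ :=
  ∑ i ∈ Icc (0 : ℤ) U, z ^ i * C n i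

namespace truncBinomSum

lemma eq_zero_of_neg (z : ℝ) (n : ℤ) {U : ℤ} (hU : U < 0) : truncBinomSum z n U = 0 := by
  rw [truncBinomSum, Icc_eq_empty (by omega), sum_empty]

lemma eq_sub_one (z : ℝ) (n U : ℤ) :
    truncBinomSum z n U = truncBinomSum z n (U - 1) + z ^ U * C n U := by
  rcases lt_or_ge U 0 with hU | hU
  · rw [eq_zero_of_neg z n hU, eq_zero_of_neg z n (by omega), C.eq_zero_of_neg_right hU,
      mul_zero, add_zero]
  · have h := sum_Icc_add_one_right (show 0 ≤ U - 1 + 1 by omega) fun i => z ^ i * C n i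
    rwa [sub_add_cancel] at h

lemma succ_left {z : ℝ} (hz : z ≠ 0) {n : ℤ} (hn : 0 ≤ n) (U : ℤ) :
    truncBinomSum z (n + 1) U = (1 + z) * truncBinomSum z n U - z ^ (U + 1) * C n U := by
  rcases lt_or_ge U 0 with hU | hU
  · rw [eq_zero_of_neg z _ hU, eq_zero_of_neg z _ hU, C.eq_zero_of_neg_right hU]; ring
  have hshift : ∑ i ∈ Icc (0 : ℤ) U, z ^ i * C n (i - 1) = z * truncBinomSum z n (U - 1) := by
    obtain ⟨V, rfl⟩ : ∃ V, U = V + 1 := ⟨U - 1, by ring⟩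
    rw [sum_Icc_eq_add_sum_Icc_add_one hU, C.eq_zero_of_neg_right (by norm_num), mul_zero,
      zero_add, ← sum_Icc_add_right, add_sub_cancel_right, truncBinomSum, mul_sum]
    refine sum_congr rfl fun i _ => ?_
    rw [add_sub_cancel_right, zpow_add_one₀ hz]
    ring
  have hpascal : truncBinomSum z (n + 1) U
      = truncBinomSum z n U + ∑ i ∈ Icc (0 : ℤ) U, z ^ i * C n (i - 1) := by
    simp only [truncBinomSum, C.succ_left hn, mul_add, sum_add_distrib]
  rw [hpascal, hshift, eq_sub_one z n U, zpow_add_one₀ hz]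
  ring

/-- With `n = k - 2` and `d = m - k`, this is the step from `k - 1` to `k` in the coefficients
of `G`. -/
lemma bracket {z : ℝ} (hz : z ≠ 0) (n : ℤ) {p : ℤ} (hp : 0 ≤ p) (d : ℤ) :
    C (n + 1) (p + 1) * truncBinomSum z (p + 1) (p + 1 + d)
      - C n (p + 1) * truncBinomSum z (p + 1) (p + 2 + d)
      - (1 + z) * C n p * truncBinomSum z p (p + 1 + d)
      = -z ^ (p + 2 + d) * C n (-d - 1) * C (n + d + 2) (p + 2 + d) := by
  rcases lt_or_ge n 0 with hn | hn
  · simp [C.eq_zero_of_neg_left hn, C.eq_zero_of_lt (show n + 1 < p + 1 by omega)]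
  have hP1 := eq_sub_one z (p + 1) (p + 2 + d)
  have hP2 := succ_left hz hp (p + 1 + d)
  rw [show p + 2 + d - 1 = p + 1 + d by ring] at hP1
  rw [show p + 1 + d + 1 = p + 2 + d by ring] at hP2
  have hM1 : C n (p + 1) * C (p + 1) (p + 2 + d) = C n (-d - 1) * C (n + d + 1) (p + 2 + d) := by
    rw [C.symm (p + 1), C.mul]; ring_nf
  have hM2 : C n p * C p (p + 1 + d) = C n (-d - 1) * C (n + d + 1) (p + 1 + d) := by
    rw [C.symm p, C.mul]; ring_nf
  rcases lt_or_ge (n + d + 1) 0 with hnd | hnd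
  · rw [C.eq_zero_of_lt (show n < -d - 1 by omega)] at hM1 hM2 ⊢
    rw [C.succ_left hn, add_sub_cancel_right]
    linear_combination (-C n (p + 1)) * hP1 + C n p * hP2
      - z ^ (p + 2 + d) * hM1 - z ^ (p + 2 + d) * hM2
  · rw [C.succ_left hn, show n + d + 2 = n + d + 1 + 1 by ring, C.succ_left hnd,
      show p + 2 + d - 1 = p + 1 + d by ring, add_sub_cancel_right]
    linear_combination (-C n (p + 1)) * hP1 + C n p * hP2
      - z ^ (p + 2 + d) * hM1 - z ^ (p + 2 + d) * hM2

end truncBinomSum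

noncomputable def Gterm (b m : ℕ) (k r : ℤ) : ℝ :=
  C (k - 1) (r - 1) * (((b : ℝ) - 1) / (-(b : ℝ)) ^ r) *
    ∑ i ∈ Icc (0 : ℤ) (r - 1 - max (k - (m : ℤ)) 0), (-(b : ℝ)) ^ i * C (r - 1) i

/-- `Gcoeff b m s 0 k` is the coefficient of `(b x) ^ k` in `G b m s x`; a positive `j` shifts
the summation index `r` by `j`. -/
noncomputable def Gcoeff (b m s : ℕ) (j k : ℤ) : ℝ :=
  binomialTransform (fun r => Gterm b m k (r + j)) s

lemma Gterm_eq (b m : ℕ) (k r : ℤ) :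
    Gterm b m k r = C (k - 1) (r - 1) * (((b : ℝ) - 1) / (-(b : ℝ)) ^ r) *
      truncBinomSum (-(b : ℝ)) (r - 1) (r - 1 + m - k) := by
  rw [Gterm, truncBinomSum]
  congr 1
  rcases le_or_gt k m with hk | hk
  · -- the `max` only cuts off indices at which `C (r - 1) i` vanishes anyway
    rw [max_eq_right (by omega), sub_zero]
    refine sum_subset (Icc_subset_Icc le_rfl (by omega)) fun i hi hi' => ?_
    rw [mem_Icc] at hi hi'
    rw [C.eq_zero_of_lt (by omega), mul_zero]
  · rw [max_eq_left (by omega)]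
    congr 2
    ring

lemma Gterm_zero (b m : ℕ) (k : ℤ) : Gterm b m k 0 = 0 := by
  rw [Gterm, C.eq_zero_of_neg_right (by norm_num), zero_mul, zero_mul]

lemma Gterm_eq_zero_of_lt {b m : ℕ} {k r : ℤ} (h : k < r) : Gterm b m k r = 0 := by
  rw [Gterm, C.eq_zero_of_lt (by omega), zero_mul, zero_mul]

lemma Gterm_eq_zero_of_le {b m : ℕ} {k r : ℤ} (h : m + r ≤ k) : Gterm b m k r = 0 := by
  rw [Gterm_eq, truncBinomSum.eq_zero_of_neg _ _ (by omega), mul_zero]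

lemma Gterm_sub {b : ℕ} (hb : b ≠ 0) (m : ℕ) (k : ℤ) {p : ℤ} (hp : 0 ≤ p) :
    Gterm b m k (p + 2) - Gterm b m (k - 1) (p + 2) - ((b - 1) / b) * Gterm b m (k - 1) (p + 1)
      = -((b : ℝ) - 1) * (-(b : ℝ)) ^ ((m : ℤ) - k) * C (k - 2) (k - m - 1)
          * C m (p + 2 + m - k) := by
  have hz : -(b : ℝ) ≠ 0 := by simpa using hb
  have key := truncBinomSum.bracket hz (k - 2) hp (m - k)
  simp only [Gterm_eq, show k - 2 + 1 = k - 1 by ring, show k - 1 - 1 = k - 2 by ring,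
    show p + 2 - 1 = p + 1 by ring, add_sub_cancel_right] at key ⊢
  rw [show -((m : ℤ) - k) - 1 = k - m - 1 by ring, show k - 2 + (m - k) + 2 = (m : ℤ) by ring]
    at key
  rw [show p + 1 + m - k = p + 1 + ((m : ℤ) - k) by ring,
    show p + 1 + m - (k - 1) = p + 2 + ((m : ℤ) - k) by ring,
    show p + m - (k - 1) = p + 1 + ((m : ℤ) - k) by ring,
    show p + 2 + m - k = p + 2 + ((m : ℤ) - k) by ring]
  have hp2 : (-(b : ℝ)) ^ (p + 2) = (-(b : ℝ)) ^ (p + 1) * -(b : ℝ) := by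
    rw [← zpow_add_one₀ hz]; ring_nf
  have hpd : (-(b : ℝ)) ^ (p + 2 + ((m : ℤ) - k))
      = (-(b : ℝ)) ^ (p + 1) * -(b : ℝ) * (-(b : ℝ)) ^ ((m : ℤ) - k) := by
    rw [← hp2, ← zpow_add₀ hz]
  rw [hpd] at key
  rw [hp2]
  linear_combination (norm := skip) ((b : ℝ) - 1) / ((-(b : ℝ)) ^ (p + 1) * -(b : ℝ)) * key
  field_simp
  ring

lemma Gcoeff_succ (b m s : ℕ) (j k : ℤ) :
    Gcoeff b m (s + 1) j k = Gcoeff b m s j k + Gcoeff b m s (j + 1) k := by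
  simp only [Gcoeff, binomialTransform.succ, add_assoc, add_comm (1 : ℤ)]

lemma Gcoeff_eq_zero_of_lt {b m s : ℕ} {j k : ℤ} (h : k < j) : Gcoeff b m s j k = 0 :=
  binomialTransform.eq_zero fun _ hp _ => Gterm_eq_zero_of_lt (by omega)

lemma Gcoeff_eq_zero_of_le {b m s : ℕ} {j k : ℤ} (h : m + s + j ≤ k) : Gcoeff b m s j k = 0 :=
  binomialTransform.eq_zero fun _ _ hp => Gterm_eq_zero_of_le (by omega)

lemma G_eq_sum_Gcoeff (b m s : ℕ) (x : ℝ) {N : ℤ} (hN : m + s - 1 ≤ N) :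
    G b m s x = ∑ k ∈ Icc 1 N, Gcoeff b m s 0 k * ((b : ℝ) * x) ^ k := by
  have hcoeff : ∀ k : ℤ, ∑ r ∈ Icc (1 : ℤ) s, C s r * C (k - 1) (r - 1)
      * (((b : ℝ) - 1) / (-(b : ℝ)) ^ r)
      * ∑ i ∈ Icc (0 : ℤ) (r - 1 - max (k - (m : ℤ)) 0), (-(b : ℝ)) ^ i * C (r - 1) i
      = Gcoeff b m s 0 k := fun k => by
    rw [Gcoeff, binomialTransform.eq_sum_Icc_one (by rw [zero_add, Gterm_zero])]
    simp only [add_zero, Gterm, mul_assoc]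
  rw [G]
  simp only [hcoeff]
  refine sum_subset (Icc_subset_Icc le_rfl hN) fun k hk hk' => ?_
  rw [mem_Icc] at hk hk'
  rw [Gcoeff_eq_zero_of_le (by omega), zero_mul]

lemma G_eq_zero_of_mul_eq_zero {b : ℕ} {x : ℝ} (h : (b : ℝ) * x = 0) (m s : ℕ) :
    G b m s x = 0 :=
  sum_eq_zero fun k hk => by rw [h, zero_zpow _ (by grind), mul_zero]

lemma Gcoeff_two_sub {b : ℕ} (hb : b ≠ 0) (m s : ℕ) (k : ℤ) :
    Gcoeff b m s 2 k - Gcoeff b m s 2 (k - 1) - ((b - 1) / b) * Gcoeff b m s 1 (k - 1)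
      = -((b : ℝ) - 1) * (-(b : ℝ)) ^ ((m : ℤ) - k) * C (m + s) (m - 1)
          * C (s + 1) (k - m - 1) := by
  have hlin :
      Gcoeff b m s 2 k - Gcoeff b m s 2 (k - 1) - ((b - 1) / b) * Gcoeff b m s 1 (k - 1)
      = binomialTransform (fun p => Gterm b m k (p + 2) - Gterm b m (k - 1) (p + 2)
          - ((b - 1) / b) * Gterm b m (k - 1) (p + 1)) s := by
    simp only [Gcoeff, binomialTransform, mul_sum, ← sum_sub_distrib]
    exact sum_congr rfl fun p _ => by ring
  have hterm : ∀ p : ℤ, 0 ≤ p → p ≤ s →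
      Gterm b m k (p + 2) - Gterm b m (k - 1) (p + 2)
          - ((b - 1) / b) * Gterm b m (k - 1) (p + 1)
        = (-((b : ℝ) - 1) * (-(b : ℝ)) ^ ((m : ℤ) - k) * C (k - 2) (m - 1))
          * C m (k - 2 - p) :=
    fun p hp _ => by
      rw [Gterm_sub hb m k hp, C.symm (k - 2) (k - m - 1), C.symm m (p + 2 + m - k)]
      ring_nf
  have hchoose :
      C (s + m) (k - 2) * C (k - 2) (m - 1) = C (m + s) (m - 1) * C (s + 1) (k - m - 1) := by
    rw [C.mul, add_comm (s : ℤ)]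
    ring_nf
  rw [hlin, binomialTransform.congr hterm, binomialTransform.const_mul,
    binomialTransform.vandermonde, mul_assoc, mul_comm (C _ _), hchoose]
  ring

lemma sum_zpow_mul_C_sub {b : ℕ} (hb : b ≠ 0) {x : ℝ} (hx : x ≠ 0) (m n : ℕ) {N : ℤ}
    (hN : m + n + 1 ≤ N) :
    ∑ k ∈ Icc 1 N, (-(b : ℝ)) ^ ((m : ℤ) - k) * C n (k - m - 1) * ((b : ℝ) * x) ^ k
      = -((b : ℝ) ^ m * x ^ (m + 1)) * (1 - x) ^ n := by
  have hz : -(b : ℝ) ≠ 0 := by simpa using hb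
  have hy : (b : ℝ) * x ≠ 0 := mul_ne_zero (by simpa using hb) hx
  have hterm : ∀ t : ℤ,
      (-(b : ℝ)) ^ ((m : ℤ) - (t + (m + 1))) * ((b : ℝ) * x) ^ (t + (m + 1))
        = -((b : ℝ) ^ m * x ^ (m + 1)) * (-x) ^ t := fun t => by
    have hbase : (-(b : ℝ))⁻¹ * ((b : ℝ) * x) = -x := by field_simp
    rw [show (m : ℤ) - (t + (m + 1)) = -t + -1 by ring, zpow_add₀ hz, zpow_add₀ hy,
      zpow_neg, ← inv_zpow, zpow_neg_one,
      show ((m : ℤ) + 1) = ((m + 1 : ℕ) : ℤ) by push_cast; ring, zpow_natCast]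
    calc ((-(b : ℝ))⁻¹) ^ t * (-(b : ℝ))⁻¹ * (((b : ℝ) * x) ^ t * ((b : ℝ) * x) ^ (m + 1))
        = ((-(b : ℝ))⁻¹ * ((b : ℝ) * x)) ^ t
            * ((-(b : ℝ))⁻¹ * ((b : ℝ) * x) ^ (m + 1)) := by
          rw [mul_zpow ((-(b : ℝ))⁻¹)]; ring
      _ = _ := by rw [hbase, mul_pow, pow_succ]; field_simp
  simp only [mul_comm _ (C _ _), mul_assoc, sub_sub]
  rw [binomialTransform.eq_sum_Icc_sub _ n (by omega) (by omega)]
  simp only [hterm, binomialTransform.const_mul,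
    binomialTransform.zpow_eq_one_add_pow (neg_ne_zero.2 hx), ← sub_eq_add_neg]

lemma G_second_order {b : ℕ} (hb : b ≠ 0) (m s : ℕ) {x : ℝ} (hx : x ≠ 0) :
    (1 - b * x) * G b m (s + 2) x - (2 - x - b * x) * G b m (s + 1) x + (1 - x) * G b m s x
      = (b - 1) * b ^ m * x ^ (m + 1) * C (m + s) (m - 1) * (1 - x) ^ (s + 1) := by
  have hy : (b : ℝ) * x ≠ 0 := mul_ne_zero (by simpa using hb) hx
  set N : ℤ := m + s + 2
  have hG0 := G_eq_sum_Gcoeff b m s x (N := N) (by omega)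
  have hG1 := G_eq_sum_Gcoeff b m (s + 1) x (N := N) (by omega)
  have hG2 := G_eq_sum_Gcoeff b m (s + 2) x (N := N) (by omega)
  simp only [Gcoeff_succ, zero_add, show (1 : ℤ) + 1 = 2 by norm_num] at hG1 hG2
  -- since `x = (b * x) / b`, the three-term combination collapses to a first difference in `k`
  have hcollect :
      (1 - b * x) * G b m (s + 2) x - (2 - x - b * x) * G b m (s + 1) x + (1 - x) * G b m s x
        = ∑ k ∈ Icc 1 N, Gcoeff b m s 2 k * ((b : ℝ) * x) ^ k
          - ∑ k ∈ Icc 1 N, (Gcoeff b m s 2 k + (b - 1) / b * Gcoeff b m s 1 k)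
              * ((b : ℝ) * x) ^ (k + 1) := by
    rw [hG0, hG1, hG2, mul_sum, mul_sum, mul_sum, ← sum_sub_distrib, ← sum_add_distrib,
      ← sum_sub_distrib]
    refine sum_congr rfl fun k _ => ?_
    rw [zpow_add_one₀ hy]
    field_simp
    ring
  have hshift := sum_Icc_one_comp_add_one (show 0 ≤ N by omega)
    (fun k => (Gcoeff b m s 2 (k - 1) + (b - 1) / b * Gcoeff b m s 1 (k - 1))
      * ((b : ℝ) * x) ^ k)
    (by simp [Gcoeff_eq_zero_of_lt])
    (by simp [Gcoeff_eq_zero_of_le, N])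
  simp only [add_sub_cancel_right] at hshift
  rw [hcollect, hshift, ← sum_sub_distrib]
  calc ∑ k ∈ Icc 1 N, ((Gcoeff b m s 2 k * ((b : ℝ) * x) ^ k)
        - (Gcoeff b m s 2 (k - 1) + (b - 1) / b * Gcoeff b m s 1 (k - 1)) * ((b : ℝ) * x) ^ k)
      = -((b : ℝ) - 1) * C (m + s) (m - 1) * ∑ k ∈ Icc 1 N,
          (-(b : ℝ)) ^ ((m : ℤ) - k) * C (s + 1 : ℕ) (k - m - 1) * ((b : ℝ) * x) ^ k := by
        rw [mul_sum]
        refine sum_congr rfl fun k _ => ?_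
        rw [← sub_mul, ← sub_sub, Gcoeff_two_sub hb]
        push_cast
        ring
    _ = _ := by
        rw [sum_zpow_mul_C_sub hb hx m (s + 1) (by omega)]
        ring

theorem G_third_order_recurrence_general (b m s : ℕ) (x : ℝ) :
    ((s : ℝ) + 2) * ((b : ℝ) * x - 1) * G b m (s + 3) x +
      ((m : ℝ) * ((b : ℝ) * x - 1) * (x - 1) + (b : ℝ) * (s : ℝ) * x * (x - 2) +
          (b : ℝ) * x * (x - 3) - (s : ℝ) * (2 * x - 3) - 3 * x + 5) * G b m (s + 2) x -
      (x - 1) * ((b : ℝ) * (m : ℝ) * x + (b : ℝ) * (s : ℝ) * x + (b : ℝ) * x +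
          (m : ℝ) * x - 2 * (m : ℝ) + (s : ℝ) * x - 3 * (s : ℝ) + x - 4) * G b m (s + 1) x +
      (x - 1) ^ 2 * ((m : ℝ) + (s : ℝ) + 1) * G b m s x = 0 := by
  by_cases hy : (b : ℝ) * x = 0
  · simp [G_eq_zero_of_mul_eq_zero hy]
  obtain ⟨hb, hx⟩ : b ≠ 0 ∧ x ≠ 0 := by simpa using hy
  have h₀ := G_second_order hb m s hx
  have h₁ := G_second_order hb m (s + 1) hx
  have hC := C.sub_mul_succ (m + s) (m - 1)
  push_cast at h₁ hC
  rw [show s + 1 + 2 = s + 3 by ring, show s + 1 + 1 = s + 2 by ring,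
    show (m : ℤ) + (s + 1) = m + s + 1 by ring] at h₁
  linear_combination (-((s : ℝ) + 2)) * h₁ + ((m + s + 1) * (1 - x)) * h₀
    - ((b - 1) * b ^ m * x ^ (m + 1) * (1 - x) ^ (s + 2)) * hC

theorem G_third_order_recurrence (b m s : ℕ) (hb : 2 ≤ b) (hm : 1 ≤ m) (hs : 1 ≤ s)
    (x : ℝ) :
    ((s : ℝ) + 2) * ((b : ℝ) * x - 1) * G b m (s + 3) x +
      ((m : ℝ) * ((b : ℝ) * x - 1) * (x - 1) + (b : ℝ) * (s : ℝ) * x * (x - 2) +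
          (b : ℝ) * x * (x - 3) - (s : ℝ) * (2 * x - 3) - 3 * x + 5) * G b m (s + 2) x -
      (x - 1) * ((b : ℝ) * (m : ℝ) * x + (b : ℝ) * (s : ℝ) * x + (b : ℝ) * x +
          (m : ℝ) * x - 2 * (m : ℝ) + (s : ℝ) * x - 3 * (s : ℝ) + x - 4) * G b m (s + 1) x +
      (x - 1) ^ 2 * ((m : ℝ) + (s : ℝ) + 1) * G b m s x = 0 :=
  G_third_order_recurrence_general b m s x
end

section
/- For all natural numbers b, m, s with b ≥ 2 and m, s ≥ 1, and all real x with 0 ≤ x < 1, we have G_s(x) ≤ 0. -/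
open Finset

/-!
Reflecting the innermost sum (`l = r - 1 - i`) and summing over `r` by Vandermonde's identity
turns the coefficient of `(b x)^k` into a single sum over `l`; the substitution `j = k - l` then gives
`G_s(x) = -(b - 1) Σ_{j=1}^m b^(j-1) P(Bin(s + j - 1, x) ≥ j)`, since the binomial tail
`P(Bin(w, x) ≥ j) = Σ_{i ≥ j} C(w,i) x^i (1 - x)^(w-i)` expands to
`Σ_{k ≥ j} (-1)^(k-j) C(k-1, j-1) C(w,k) x^k`. Tail probabilities are nonnegative for `0 ≤ x ≤ 1`.
-/

lemma sum_eq_sum_of_support {ι M : Type*} [AddCommMonoid M] {s t : Finset ι} {f : ι → M}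
    (h : ∀ i, f i ≠ 0 → (i ∈ s ↔ i ∈ t)) : ∑ i ∈ s, f i = ∑ i ∈ t, f i := by
  classical
  rw [← sum_filter_ne_zero s, ← sum_filter_ne_zero t]
  congr 1
  ext i
  simp only [mem_filter]
  exact ⟨fun ⟨hi, h0⟩ => ⟨(h i h0).1 hi, h0⟩, fun ⟨hi, h0⟩ => ⟨(h i h0).2 hi, h0⟩⟩

lemma sum_Icc_natCast {M : Type*} [AddCommMonoid M] (a b : ℕ) (f : ℤ → M) :
    ∑ i ∈ Icc (a : ℤ) b, f i = ∑ i ∈ Icc a b, f i := by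
  refine sum_nbij' Int.toNat (↑) ?_ ?_ ?_ ?_ ?_ <;> intro i hi <;> simp only [mem_Icc] at hi ⊢ <;>
    first | omega | (congr 1; omega)

lemma C_natCast (n j : ℕ) : C n j = n.choose j := by
  unfold C
  split_ifs with h
  · simp
  · rw [Nat.choose_eq_zero_of_lt (by omega), Nat.cast_zero]

lemma C_eq_zero_of_lt {n j : ℤ} (h : n < j) : C n j = 0 := by
  unfold C; rw [if_neg (by omega)]

lemma C_eq_zero_of_neg {n j : ℤ} (h : j < 0) : C n j = 0 := by
  unfold C; rw [if_neg (by omega)]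

lemma C_ne_zero_iff {n j : ℤ} : C n j ≠ 0 ↔ 0 ≤ j ∧ j ≤ n := by
  unfold C
  split_ifs with h
  · simpa [h] using (Nat.choose_pos (by omega : j.toNat ≤ n.toNat)).ne'
  · simp [h]

lemma C_symm (n j : ℤ) : C n j = C n (n - j) := by
  unfold C
  by_cases h : 0 ≤ j ∧ j ≤ n
  · rw [if_pos h, if_pos (by omega), show (n - j).toNat = n.toNat - j.toNat by omega,
      Nat.choose_symm (by omega)]
  · rw [if_neg h, if_neg (by omega)]

lemma C_mul_C (n k i : ℤ) : C n k * C k i = C n i * C (n - i) (k - i) := by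
  rcases lt_or_ge i 0 with hi | hi
  · simp [C_eq_zero_of_neg hi]
  rcases lt_or_ge k i with hki | hik
  · rw [C_eq_zero_of_lt hki, C_eq_zero_of_neg (by omega : k - i < 0), mul_zero, mul_zero]
  rcases lt_or_ge n i with hni | hin
  · rw [C_eq_zero_of_lt (by omega : n < k), C_eq_zero_of_lt hni, zero_mul, zero_mul]
  obtain ⟨I, rfl⟩ := Int.eq_ofNat_of_zero_le hi
  obtain ⟨K, rfl⟩ := Int.eq_ofNat_of_zero_le (hi.trans hik)
  obtain ⟨N, rfl⟩ := Int.eq_ofNat_of_zero_le (hi.trans hin)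
  rw [show (N : ℤ) - I = ((N - I : ℕ) : ℤ) by omega,
    show (K : ℤ) - I = ((K - I : ℕ) : ℤ) by omega]
  simp only [C_natCast]
  exact_mod_cast Nat.choose_mul (by omega)

-- `Icc (n - c) a` contains the support `max 0 (n - c) ≤ r ≤ min a n` of the summand.
lemma sum_Icc_C_mul_C (a c : ℕ) (n : ℤ) :
    ∑ r ∈ Icc (n - c) a, C a r * C c (n - r) = C (a + c) n := by
  rcases lt_or_ge n 0 with hn | hn
  · rw [C_eq_zero_of_neg hn]
    refine sum_eq_zero fun r _ => ?_
    rcases lt_or_ge r 0 with hr | hr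
    · rw [C_eq_zero_of_neg hr, zero_mul]
    · rw [C_eq_zero_of_neg (by omega : n - r < 0), mul_zero]
  obtain ⟨N, rfl⟩ := Int.eq_ofNat_of_zero_le hn
  have vandermonde : (a + c).choose N = ∑ r ∈ range (N + 1), a.choose r * c.choose (N - r) := by
    rw [Nat.add_choose_eq, Nat.sum_antidiagonal_eq_sum_range_succ_mk]
  calc ∑ r ∈ Icc ((N : ℤ) - c) a, C a r * C c (N - r)
      = ∑ r ∈ Icc (0 : ℤ) N, C a r * C c (N - r) := by
        refine sum_eq_sum_of_support fun r hr => ?_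
        obtain ⟨h1, h2⟩ := C_ne_zero_iff.mp (left_ne_zero_of_mul hr)
        obtain ⟨h3, h4⟩ := C_ne_zero_iff.mp (right_ne_zero_of_mul hr)
        simp only [mem_Icc]
        omega
    _ = ∑ r ∈ range (N + 1), (a.choose r * c.choose (N - r) : ℝ) := by
        rw [← Nat.cast_zero, sum_Icc_natCast, range_eq_Ico, Ico_add_one_right_eq_Icc]
        refine sum_congr rfl fun r hr => ?_
        rw [mem_Icc] at hr
        rw [← Nat.cast_sub hr.2, C_natCast, C_natCast]
    _ = C (a + c) N := by
        rw [← Nat.cast_add, C_natCast, vandermonde]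
        push_cast
        rfl

lemma sum_Icc_zpow_mul_C_reflect (y : ℝ) (n c : ℤ) :
    ∑ i ∈ Icc 0 (n - c), y ^ i * C n i = ∑ l ∈ Icc c n, y ^ (n - l) * C n l := by
  refine sum_nbij' (n - ·) (n - ·) ?_ ?_ ?_ ?_ ?_ <;> intro i hi <;> simp only [mem_Icc] at hi ⊢
  · omega
  · omega
  · omega
  · omega
  · rw [sub_sub_cancel, C_symm n i]

lemma sum_Icc_C_mul_C_mul_C (s : ℕ) (k l : ℤ) :
    ∑ r ∈ Icc (l + 1) s, C s r * C (k - 1) (r - 1) * C (r - 1) l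
      = C (k - 1) l * C (s + k - 1 - l) k := by
  rcases lt_or_ge (k - 1) l with hkl | hlk
  · rw [C_eq_zero_of_lt hkl, zero_mul]
    refine sum_eq_zero fun r _ => ?_
    rw [mul_assoc, C_mul_C, C_eq_zero_of_lt hkl, zero_mul, mul_zero]
  obtain ⟨M, hM⟩ : ∃ M : ℕ, k - 1 - l = M := ⟨(k - 1 - l).toNat, by omega⟩
  calc ∑ r ∈ Icc (l + 1) s, C s r * C (k - 1) (r - 1) * C (r - 1) l
      = C (k - 1) l * ∑ r ∈ Icc (k - M) s, C s r * C M (k - r) := by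
        rw [mul_sum, show k - M = l + 1 by omega]
        refine sum_congr rfl fun r _ => ?_
        rw [mul_assoc, C_mul_C, ← hM, C_symm (k - 1 - l),
          show k - 1 - l - (r - 1 - l) = k - r by ring]
        ring
    _ = C (k - 1) l * C (s + k - 1 - l) k := by
        rw [sum_Icc_C_mul_C, show (s : ℤ) + M = s + k - 1 - l by omega]

lemma G_coeff_eq {y : ℝ} (hy : y ≠ 0) (a : ℝ) (s : ℕ) (k : ℤ) {c : ℤ} (hc : 0 ≤ c) :
    ∑ r ∈ Icc (1 : ℤ) s, C s r * C (k - 1) (r - 1) * (a / y ^ r) *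
        ∑ i ∈ Icc 0 (r - 1 - c), y ^ i * C (r - 1) i
      = ∑ l ∈ Icc c (s - 1 : ℤ), a * y ^ (-1 - l) * (C (k - 1) l * C (s + k - 1 - l) k) := by
  have hpow : ∀ r l : ℤ, y ^ (r - 1 - l) / y ^ r = y ^ (-1 - l) := fun r l => by
    rw [← zpow_sub₀ hy]; ring_nf
  calc _ = ∑ r ∈ Icc (1 : ℤ) s, ∑ l ∈ Icc c (r - 1),
        a * y ^ (-1 - l) * (C s r * C (k - 1) (r - 1) * C (r - 1) l) := by
        refine sum_congr rfl fun r _ => ?_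
        rw [sum_Icc_zpow_mul_C_reflect, mul_sum]
        refine sum_congr rfl fun l _ => ?_
        rw [← hpow r l]
        ring
    _ = ∑ l ∈ Icc c (s - 1 : ℤ), ∑ r ∈ Icc (l + 1) s,
        a * y ^ (-1 - l) * (C s r * C (k - 1) (r - 1) * C (r - 1) l) :=
        sum_comm' fun r l => by simp only [mem_Icc]; omega
    _ = _ := by simp_rw [← mul_sum, sum_Icc_C_mul_C_mul_C]

lemma sum_Icc_sum_Icc_max_eq {M : Type*} [AddCommMonoid M] (m s : ℤ) (f : ℤ → ℤ → M)
    (hf : ∀ k l, k ≤ l → f k l = 0) :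
    ∑ k ∈ Icc 1 (m + s - 1), ∑ l ∈ Icc (max (k - m) 0) (s - 1), f k l
      = ∑ j ∈ Icc 1 m, ∑ k ∈ Icc j (s + j - 1), f k (k - j) := by
  rw [sum_sigma', sum_sigma']
  refine sum_bij_ne_zero (fun p _ _ => ⟨p.1 - p.2, p.1⟩) ?_ ?_ ?_ ?_
  · rintro ⟨k, l⟩ hkl hf0
    have : l < k := lt_of_not_ge fun h => hf0 (hf k l h)
    simp only [mem_sigma, mem_Icc] at hkl ⊢
    omega
  · rintro ⟨k, l⟩ - - ⟨k', l'⟩ - - h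
    simp only [Sigma.mk.inj_iff, heq_eq_eq] at h ⊢
    omega
  · rintro ⟨j, k⟩ hjk hf0
    simp only [mem_sigma, mem_Icc] at hjk
    exact ⟨⟨k, k - j⟩, by simp only [mem_sigma, mem_Icc]; omega, hf0, by simp⟩
  · rintro ⟨k, l⟩ - -
    simp

noncomputable def binomialTail (w j : ℕ) (x : ℝ) : ℝ :=
  ∑ i ∈ Icc j w, (w.choose i : ℝ) * x ^ i * (1 - x) ^ (w - i)

lemma binomialTail_nonneg (w j : ℕ) {x : ℝ} (hx0 : 0 ≤ x) (hx1 : x ≤ 1) :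
    0 ≤ binomialTail w j x :=
  sum_nonneg fun i _ => by have := sub_nonneg.mpr hx1; positivity

lemma choose_mul_pow_mul_one_sub_pow {w i : ℕ} (hi : i ≤ w) (x : ℝ) :
    (w.choose i : ℝ) * x ^ i * (1 - x) ^ (w - i)
      = ∑ k ∈ Icc i w, (w.choose k * k.choose i : ℝ) * ((-1) ^ (k - i) * x ^ k) := by
  rw [show 1 - x = -x + 1 by ring, add_pow, mul_sum]
  refine sum_nbij' (i + ·) (· - i) ?_ ?_ ?_ ?_ ?_ <;> intro t ht <;>
    simp only [mem_range, mem_Icc] at ht ⊢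
  · omega
  · omega
  · omega
  · omega
  · rw [Nat.add_sub_cancel_left, ← Nat.cast_mul, Nat.choose_mul (by omega : i ≤ i + t),
      Nat.add_sub_cancel_left, neg_pow, pow_add]
    push_cast
    ring

lemma sum_Icc_neg_one_pow_sub_mul_choose {j k : ℕ} (hj : 1 ≤ j) (hjk : j ≤ k) :
    ∑ i ∈ Icc j k, (-1 : ℤ) ^ (k - i) * k.choose i
      = (-1) ^ (k - j) * (k - 1).choose (j - 1) := by
  obtain ⟨n, rfl⟩ : ∃ n, k = n + 1 := ⟨k - 1, by omega⟩
  calc ∑ i ∈ Icc j (n + 1), (-1 : ℤ) ^ (n + 1 - i) * (n + 1).choose i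
      = ∑ t ∈ range (n + 1 - j + 1), (-1 : ℤ) ^ t * (n + 1).choose t := by
        refine sum_nbij' (n + 1 - ·) (n + 1 - ·) ?_ ?_ ?_ ?_ ?_ <;> intro i hi <;>
          simp only [mem_range, mem_Icc] at hi ⊢
        · omega
        · omega
        · omega
        · omega
        · rw [Nat.choose_symm (by omega)]
    _ = (-1) ^ (n + 1 - j) * (n + 1 - 1).choose (j - 1) := by
        rw [Int.alternating_sum_range_choose_eq_choose, Nat.add_sub_cancel,
          ← Nat.choose_symm (by omega : n + 1 - j ≤ n), show n - (n + 1 - j) = j - 1 by omega]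

lemma binomialTail_eq_sum {w j : ℕ} (hj : 1 ≤ j) (x : ℝ) :
    binomialTail w j x
      = ∑ k ∈ Icc j w, (-1) ^ (k - j) * ((k - 1).choose (j - 1) : ℝ) * w.choose k * x ^ k := by
  unfold binomialTail
  calc _ = ∑ i ∈ Icc j w, ∑ k ∈ Icc i w,
        (w.choose k * k.choose i : ℝ) * ((-1) ^ (k - i) * x ^ k) :=
        sum_congr rfl fun i hi => choose_mul_pow_mul_one_sub_pow (mem_Icc.mp hi).2 x
    _ = ∑ k ∈ Icc j w, ∑ i ∈ Icc j k,
        (w.choose k * k.choose i : ℝ) * ((-1) ^ (k - i) * x ^ k) :=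
        sum_comm' fun i k => by simp only [mem_Icc]; omega
    _ = ∑ k ∈ Icc j w,
        (w.choose k * x ^ k : ℝ) * ∑ i ∈ Icc j k, ((-1 : ℤ) ^ (k - i) * k.choose i : ℤ) := by
        refine sum_congr rfl fun k _ => ?_
        push_cast
        rw [mul_sum]
        exact sum_congr rfl fun i _ => by ring
    _ = _ := by
        refine sum_congr rfl fun k hk => ?_
        rw [mem_Icc] at hk
        rw [sum_Icc_neg_one_pow_sub_mul_choose hj hk.1]
        push_cast
        ring

lemma neg_zpow_neg_one_sub_mul_zpow {y : ℝ} (hy : y ≠ 0) (x : ℝ) {j k : ℕ} (hj : 1 ≤ j)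
    (hjk : j ≤ k) :
    (-y) ^ (-1 - ((k : ℤ) - j)) * (y * x) ^ (k : ℤ)
      = -((-1) ^ (k - j) * y ^ (j - 1) * x ^ k) := by
  obtain ⟨n, rfl⟩ : ∃ n, k = j + n := ⟨k - j, by omega⟩
  obtain ⟨i, rfl⟩ : ∃ i, j = i + 1 := ⟨j - 1, by omega⟩
  rw [show (-1 - ((i + 1 + n : ℕ) - (i + 1 : ℕ)) : ℤ) = -((n + 1 : ℕ) : ℤ) by push_cast; ring,
    zpow_neg, zpow_natCast, zpow_natCast, neg_pow y, pow_succ (-1 : ℝ), Nat.add_sub_cancel_left,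
    Nat.add_sub_cancel]
  rcases neg_one_pow_eq_or ℝ n with h | h <;> rw [h] <;> field_simp <;> ring

lemma sum_Icc_eq_neg_mul_binomialTail {y : ℝ} (hy : y ≠ 0) (a x : ℝ) (s : ℕ) {j : ℕ}
    (hj : 1 ≤ j) :
    ∑ k ∈ Icc (j : ℤ) (s + j - 1),
        a * (-y) ^ (-1 - (k - j)) * (C (k - 1) (k - j) * C (s + k - 1 - (k - j)) k) * (y * x) ^ k
      = -a * y ^ (j - 1) * binomialTail (s + j - 1) j x := by
  rw [binomialTail_eq_sum hj, mul_sum, show (s : ℤ) + j - 1 = ((s + j - 1 : ℕ) : ℤ) by omega,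
    sum_Icc_natCast]
  refine sum_congr rfl fun k hk => ?_
  rw [mem_Icc] at hk
  have hC : C (k - 1) (k - j) * C (s + k - 1 - (k - j)) k
      = (k - 1).choose (j - 1) * (s + j - 1).choose k := by
    rw [C_symm, show (k : ℤ) - 1 - (k - j) = ((j - 1 : ℕ) : ℤ) by omega,
      show (k : ℤ) - 1 = ((k - 1 : ℕ) : ℤ) by omega,
      show (s : ℤ) + k - 1 - (k - j) = ((s + j - 1 : ℕ) : ℤ) by omega, C_natCast, C_natCast]
  rw [hC, mul_right_comm, mul_assoc a, neg_zpow_neg_one_sub_mul_zpow hy x hj hk.1]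
  ring

lemma G_eq_neg_mul_sum_binomialTail (b m s : ℕ) (hb : 1 ≤ b) (x : ℝ) :
    G b m s x
      = -((b : ℝ) - 1) * ∑ j ∈ Icc 1 m, (b : ℝ) ^ (j - 1) * binomialTail (s + j - 1) j x := by
  have hb0 : (b : ℝ) ≠ 0 := by positivity
  calc G b m s x
      = ∑ k ∈ Icc 1 ((m : ℤ) + s - 1), ∑ l ∈ Icc (max (k - m) 0) ((s : ℤ) - 1),
          ((b : ℝ) - 1) * (-(b : ℝ)) ^ (-1 - l) * (C (k - 1) l * C (s + k - 1 - l) k)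
            * ((b : ℝ) * x) ^ k := by
        unfold G
        refine sum_congr rfl fun k _ => ?_
        rw [G_coeff_eq (neg_ne_zero.mpr hb0) _ s k (le_max_right _ _), sum_mul]
    _ = ∑ j ∈ Icc 1 (m : ℤ), ∑ k ∈ Icc j ((s : ℤ) + j - 1),
          ((b : ℝ) - 1) * (-(b : ℝ)) ^ (-1 - (k - j))
            * (C (k - 1) (k - j) * C (s + k - 1 - (k - j)) k) * ((b : ℝ) * x) ^ k :=
        sum_Icc_sum_Icc_max_eq _ _ _ fun k l hkl => by
          rw [C_eq_zero_of_lt (by omega : k - 1 < l)]; simp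
    _ = ∑ j ∈ Icc 1 m, ∑ k ∈ Icc (j : ℤ) ((s : ℤ) + j - 1),
          ((b : ℝ) - 1) * (-(b : ℝ)) ^ (-1 - (k - j))
            * (C (k - 1) (k - j) * C (s + k - 1 - (k - j)) k) * ((b : ℝ) * x) ^ k :=
        sum_Icc_natCast 1 m _
    _ = _ := by
        rw [mul_sum]
        refine sum_congr rfl fun j hj => ?_
        rw [sum_Icc_eq_neg_mul_binomialTail hb0 _ x s (mem_Icc.mp hj).1]
        ring

theorem G_nonpositive_general (b m s : ℕ) (hb : 2 ≤ b)
    (x : ℝ) (hx0 : 0 ≤ x) (hx1 : x < 1) :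
    G b m s x ≤ 0 := by
  rw [G_eq_neg_mul_sum_binomialTail b m s (by omega) x]
  have hb1 : (1 : ℝ) ≤ b := by exact_mod_cast (by omega : 1 ≤ b)
  refine mul_nonpos_of_nonpos_of_nonneg (by linarith) (sum_nonneg fun j _ => ?_)
  exact mul_nonneg (by positivity) (binomialTail_nonneg _ _ hx0 hx1.le)

theorem G_nonpositive (b m s : ℕ) (hb : 2 ≤ b) (hm : 1 ≤ m) (hs : 1 ≤ s)
    (x : ℝ) (hx0 : 0 ≤ x) (hx1 : x < 1) :
    G b m s x ≤ 0 :=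
  G_nonpositive_general b m s hb x hx0 hx1
end

section
/- For all natural numbers b, m, s with b ≥ 2 and m, s ≥ 1, and all real x, G_s(x) splits as G_s(x) = G_s^{(1)}(x) + G_s^{(2)}(x), where G_s^{(1)}(x) := −Σ_{k=1}^{m+s−1} Σ_{r=1}^{s} C(s,r)·C(k−1,r−1)·((b−1)/b)^r·(bx)^k and G_s^{(2)}(x) := Σ_{k=m+1}^{m+s−1} Σ_{r=1}^{s} C(s,r)·C(k−1,r−1)·((1−b)/(−b)^r)·( Σ_{i=r−(k−m)}^{r−1} (−b)^i·C(r−1,i) )·(bx)^k, the innermost sum of G_s^{(2)} ranging over all integers i with r−(k−m) ≤ i ≤ r−1 (terms with i < 0 vanish since C(r−1,i) = 0 for i < 0). -/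
open Finset

/-- The first part `G_s^{(1)}(x)` of the split sum. -/
noncomputable def G1 (b m s : ℕ) (x : ℝ) : ℝ :=
  -∑ k ∈ Finset.Icc (1 : ℤ) ((m : ℤ) + (s : ℤ) - 1),
      ∑ r ∈ Finset.Icc (1 : ℤ) (s : ℤ),
        C (s : ℤ) r * C (k - 1) (r - 1) * (((b : ℝ) - 1) / (b : ℝ)) ^ r *
          ((b : ℝ) * x) ^ k

/-- The second part `G_s^{(2)}(x)` of the split sum. -/
noncomputable def G2 (b m s : ℕ) (x : ℝ) : ℝ :=
  ∑ k ∈ Finset.Icc ((m : ℤ) + 1) ((m : ℤ) + (s : ℤ) - 1),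
    ∑ r ∈ Finset.Icc (1 : ℤ) (s : ℤ),
      C (s : ℤ) r * C (k - 1) (r - 1) * ((1 - (b : ℝ)) / (-(b : ℝ)) ^ r) *
        (∑ i ∈ Finset.Icc (r - (k - (m : ℤ))) (r - 1), (-(b : ℝ)) ^ i * C (r - 1) i) *
        ((b : ℝ) * x) ^ k

/-! Since `∑_{i=0}^{r-1} (-b)^i C(r-1,i) = (1-b)^(r-1)`, the truncated inner sum of `G` is
`(1-b)^(r-1)` minus its last `max(k-m,0)` terms. The full sum contributes
`(b-1)/(-b)^r · (1-b)^(r-1) = -((b-1)/b)^r`, which gives `G1`; the removed tail gives `G2`,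
whose terms with `k ≤ m` are empty sums. -/

lemma C_of_neg {n j : ℤ} (hj : j < 0) : C n j = 0 :=
  if_neg fun h => h.1.not_gt hj

lemma sum_Icc_zpow_mul_C (a : ℝ) (n : ℕ) :
    ∑ i ∈ Icc (0 : ℤ) n, a ^ i * C n i = (a + 1) ^ n := by
  rw [add_pow]
  refine sum_nbij' Int.toNat (↑) (fun i hi => ?_) (fun j hj => ?_) (fun i hi => ?_)
    (fun j _ => by simp) (fun i hi => ?_)
  all_goals simp only [mem_Icc, mem_range] at *
  · omega
  · omega
  · omega
  · lift i to ℕ using hi.1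
    simp [C_natCast]

lemma sum_Icc_zero_eq_add {M : Type*} [AddCommMonoid M] {f : ℤ → M} (hf : ∀ i < 0, f i = 0)
    {n c : ℤ} (hc : 0 ≤ c) :
    ∑ i ∈ Icc 0 n, f i = ∑ i ∈ Icc 0 (n - c), f i + ∑ i ∈ Icc (n + 1 - c) n, f i := by
  rcases le_or_gt c n with hcn | hcn
  · rw [← sum_union]
    · congr 1; ext i; simp only [mem_Icc, mem_union]; omega
    · rw [disjoint_left]; intro i; simp only [mem_Icc]; omega
  · rw [Icc_eq_empty_of_lt (a := 0) (b := n - c) (by omega), sum_empty, zero_add]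
    refine sum_subset (fun i => by simp only [mem_Icc]; omega) fun i hi hi' => hf i ?_
    simp only [mem_Icc] at hi hi'; omega

lemma div_neg_pow_succ_mul_one_sub_pow {K : Type*} [Field K] (B : K) (n : ℕ) :
    (B - 1) / (-B) ^ (n + 1) * (1 - B) ^ n = -((B - 1) / B) ^ (n + 1) :=
  calc (B - 1) / (-B) ^ (n + 1) * (1 - B) ^ n = (B - 1) / -B * ((1 - B) / -B) ^ n := by
        rw [div_pow, pow_succ]; ring
    _ = -((B - 1) / B) ^ (n + 1) := by
        rw [← neg_sub B 1, neg_div_neg_eq, div_neg, pow_succ']; ring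

lemma div_zpow_mul_sum_Icc_eq (B : ℝ) {r c : ℤ} (hr : 1 ≤ r) (hc : 0 ≤ c) :
    (B - 1) / (-B) ^ r * ∑ i ∈ Icc 0 (r - 1 - c), (-B) ^ i * C (r - 1) i
      = -((B - 1) / B) ^ r +
        (1 - B) / (-B) ^ r * ∑ i ∈ Icc (r - c) (r - 1), (-B) ^ i * C (r - 1) i := by
  obtain ⟨n, rfl⟩ : ∃ n : ℕ, r = n + 1 := ⟨(r - 1).toNat, by omega⟩
  have hz (a : ℝ) : a ^ ((n : ℤ) + 1) = a ^ (n + 1) := by exact_mod_cast zpow_natCast a (n + 1)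
  have hsum := sum_Icc_zpow_mul_C (-B) n
  rw [sum_Icc_zero_eq_add (fun i hi => by simp [C_of_neg hi]) hc, neg_add_eq_sub] at hsum
  simp only [add_sub_cancel_right, hz]
  linear_combination (B - 1) / (-B) ^ (n + 1) * hsum + div_neg_pow_succ_mul_one_sub_pow B n

lemma G2_eq_sum_Icc_one (b m s : ℕ) (x : ℝ) :
    G2 b m s x = ∑ k ∈ Icc (1 : ℤ) (m + s - 1), ∑ r ∈ Icc (1 : ℤ) s,
      C s r * C (k - 1) (r - 1) * ((1 - (b : ℝ)) / (-(b : ℝ)) ^ r) *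
        (∑ i ∈ Icc (r - max (k - m) 0) (r - 1), (-(b : ℝ)) ^ i * C (r - 1) i) *
        ((b : ℝ) * x) ^ k := by
  have hIcc (d r : ℤ) : Icc (r - d) (r - 1) = Icc (r - max d 0) (r - 1) := by
    ext i; simp only [mem_Icc]; omega
  simp_rw [G2, hIcc (_ - (m : ℤ))]
  refine sum_subset (Icc_subset_Icc (by omega) le_rfl) fun k hk hk' => sum_eq_zero fun r _ => ?_
  simp only [mem_Icc] at hk hk'
  rw [Icc_eq_empty_of_lt (by omega), sum_empty, mul_zero, zero_mul]

theorem G_splits_general (b m s : ℕ) (x : ℝ) :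
    G b m s x = G1 b m s x + G2 b m s x := by
  rw [G, G1, G2_eq_sum_Icc_one, ← sum_neg_distrib, ← sum_add_distrib]
  refine sum_congr rfl fun k _ => ?_
  rw [sum_mul, ← sum_neg_distrib, ← sum_add_distrib]
  refine sum_congr rfl fun r hr => ?_
  linear_combination (C s r * C (k - 1) (r - 1) * ((b : ℝ) * x) ^ k) *
    div_zpow_mul_sum_Icc_eq (b : ℝ) (mem_Icc.1 hr).1 (le_max_right (k - m) 0)

theorem G_splits (b m s : ℕ) (hb : 2 ≤ b) (hm : 1 ≤ m) (hs : 1 ≤ s) (x : ℝ) :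
    G b m s x = G1 b m s x + G2 b m s x :=
  G_splits_general b m s x
end

section
/- For every natural number n, the sum f(n) := Σ_{k=5}^{n} C(n,k) satisfies the second-order homogeneous recurrence (n−3)·f(n+2) + (5−3n)·f(n+1) + 2(n+1)·f(n) = 0 (an identity of integers, where n−3 and 5−3n are taken in ℤ). -/
open Finset

/-!
Summing Pascal's rule over `5 ≤ k` gives `f (n + 1) = 2 f n + C(n, 4)`. Using this twice
turns the recurrence into `(n - 3) C(n + 1, 4) = (n + 1) C(n, 4)`, which is the absorption
identity `(m + 1 - k) C(m + 1, k) = (m + 1) C(m, k)`.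
-/

theorem Nat.sum_Icc_choose_add_one (a n : ℕ) :
    ∑ k ∈ Icc (a + 1) (n + 1), (n + 1).choose k =
      2 * ∑ k ∈ Icc (a + 1) n, n.choose k + n.choose a := by
  rcases lt_or_ge n a with hna | han
  · rw [Icc_eq_empty (by omega), Icc_eq_empty (by omega), Nat.choose_eq_zero_of_lt hna]
    rfl
  have hshift : ∀ f : ℕ → ℕ, ∑ k ∈ Icc (a + 1) (n + 1), f k = ∑ j ∈ Icc a n, f (j + 1) := by
    intro f
    rw [← map_add_right_Icc, sum_map]
    rfl
  have hbot : ∑ j ∈ Icc a n, n.choose j = n.choose a + ∑ k ∈ Icc (a + 1) n, n.choose k := by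
    rw [Icc_eq_cons_Ioc han, sum_cons, Icc_add_one_left_eq_Ioc]
  have htop : ∑ k ∈ Icc (a + 1) (n + 1), n.choose k = ∑ k ∈ Icc (a + 1) n, n.choose k := by
    rw [sum_Icc_succ_top (by omega), Nat.choose_succ_self, add_zero]
  rw [hshift, sum_congr rfl fun j _ => Nat.choose_succ_succ' n j, sum_add_distrib,
    ← hshift (n.choose ·), htop, hbot]
  ring

theorem Nat.cast_add_one_sub_mul_choose (n k : ℕ) :
    ((n : ℤ) + 1 - k) * (n + 1).choose k = (n + 1) * n.choose k := by
  rcases le_or_gt k (n + 1) with hk | hk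
  · have h := Nat.choose_mul_succ_eq n k
    rw [mul_comm _ (n + 1 - k)] at h
    have : ((n + 1 - k : ℕ) : ℤ) = (n : ℤ) + 1 - k := by push_cast [hk]; ring
    rw [← this, mul_comm ((n : ℤ) + 1)]
    exact_mod_cast h.symm
  · simp [Nat.choose_eq_zero_of_lt hk, Nat.choose_eq_zero_of_lt (Nat.lt_of_succ_lt hk)]

theorem toy_sum_homogeneous_recurrence (n : ℕ) :
    ((n : ℤ) - 3) * (∑ k ∈ Finset.Icc 5 (n + 2), ((n + 2).choose k : ℤ)) +
      (5 - 3 * (n : ℤ)) * (∑ k ∈ Finset.Icc 5 (n + 1), ((n + 1).choose k : ℤ)) +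
      2 * ((n : ℤ) + 1) * (∑ k ∈ Finset.Icc 5 n, (n.choose k : ℤ)) = 0 := by
  have step₀ : ∑ k ∈ Icc 5 (n + 1), ((n + 1).choose k : ℤ) =
      2 * ∑ k ∈ Icc 5 n, (n.choose k : ℤ) + n.choose 4 := by
    exact_mod_cast Nat.sum_Icc_choose_add_one 4 n
  have step₁ : ∑ k ∈ Icc 5 (n + 2), ((n + 2).choose k : ℤ) =
      2 * ∑ k ∈ Icc 5 (n + 1), ((n + 1).choose k : ℤ) + (n + 1).choose 4 := by
    exact_mod_cast Nat.sum_Icc_choose_add_one 4 (n + 1)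
  have absorb : ((n : ℤ) + 1 - 4) * (n + 1).choose 4 = (n + 1) * n.choose 4 := by
    exact_mod_cast Nat.cast_add_one_sub_mul_choose n 4
  linear_combination ((n : ℤ) - 3) * step₁ - ((n : ℤ) + 1) * step₀ + absorb
end
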